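/- arXiv:1609.02892 — 3 statements merged into one kernel-verified Lean document; each statement's English description precedes it below -/
import Mathlib

section
/- Let E ⊆ ℝ^n be compact, f a continuous nonnegative function on ℝ^n, and (E_j) a decreasing sequence of sets each containing E and converging to E in the Hausdorff metric. Then lim_{j→∞} ∫_{E_j} f dH^d_∞ is comparable (up to dimensional constants) to ∫_E f dH^d_∞. -/
open Metric Set MeasureTheory ENNReal

noncomputable section

/-- `d`-dimensional Hausdorff content. -/
def hContent {X : Type*} [EMetricSpace X] (d : ℕ) (A : Set X) : ℝ≥0∞ :=
  ⨅ (U : ℕ → Set X) (_ : A ⊆ ⋃ i, U i), ∑' i, EMetric.diam (U i) ^ d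

/-- The Choquet integral `∫_E f dH^d_∞ = ∫_0^∞ H^d_∞({x ∈ E : f x > t}) dt`. -/
def choquet {X : Type*} [EMetricSpace X] (d : ℕ) (E : Set X) (f : X → ℝ) : ℝ≥0∞ :=
  ∫⁻ t in Ioi (0:ℝ), hContent d {x | x ∈ E ∧ t < f x}

open scoped NNReal

variable {X : Type*} [EMetricSpace X]

lemma hContent_mono (d : ℕ) {A B : Set X} (h : A ⊆ B) : hContent d A ≤ hContent d B := by
  refine le_iInf₂ fun U hU => ?_
  exact iInf₂_le U (h.trans hU)

lemma hContent_le_diam_pow {d : ℕ} (hd : d ≠ 0) (A : Set X) :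
    hContent d A ≤ EMetric.diam A ^ d := by
  have h : hContent d A ≤ ∑' i, EMetric.diam ((fun i => if i = 0 then A else ∅) i) ^ d := by
    refine iInf₂_le _ ?_
    intro x hx
    exact mem_iUnion.2 ⟨0, by simpa using hx⟩
  refine h.trans ?_
  rw [tsum_eq_single 0 (by intro i hi; simp [hi, zero_pow hd, hd, EMetric.diam])]
  simp

lemma hContent_empty {d : ℕ} (hd : d ≠ 0) : hContent d (∅ : Set X) = 0 := by
  simpa [zero_pow hd, EMetric.diam] using hContent_le_diam_pow hd (∅ : Set X)

lemma hContent_zero (A : Set X) : hContent 0 A = ∞ := by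
  refine le_antisymm le_top ?_
  refine le_iInf₂ fun U hU => ?_
  simp only [pow_zero]
  exact le_of_eq (ENNReal.tsum_const_eq_top_of_ne_zero one_ne_zero).symm

lemma choquet_mono (d : ℕ) {A B : Set X} (f : X → ℝ) (h : A ⊆ B) :
    choquet d A f ≤ choquet d B f := by
  refine lintegral_mono fun t => hContent_mono d ?_
  exact fun x hx => ⟨h hx.1, hx.2⟩

lemma antitone_hc (d : ℕ) (A : Set X) (f : X → ℝ) :
    Antitone fun t : ℝ => hContent d {x | x ∈ A ∧ t < f x} := fun s t hst =>
  hContent_mono d fun x hx => ⟨hx.1, lt_of_le_of_lt hst hx.2⟩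

lemma lint_half (g : ℝ → ℝ≥0∞) (hg : Measurable g) :
    ∫⁻ t in Ioi (0:ℝ), g (2⁻¹ * t) = 2 * ∫⁻ t in Ioi (0:ℝ), g t := by
  have hpre : (fun t : ℝ => 2⁻¹ * t) ⁻¹' Ioi (0:ℝ) = Ioi (0:ℝ) := by
    ext x; simp [Set.mem_preimage, mem_Ioi]
  have h1 : Measure.map (fun t : ℝ => 2⁻¹ * t) (volume.restrict (Ioi (0:ℝ)))
      = (Measure.map (fun t : ℝ => 2⁻¹ * t) volume).restrict (Ioi (0:ℝ)) := by
    rw [Measure.restrict_map (measurable_const_mul _) measurableSet_Ioi, hpre]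
  have h2 : Measure.map (fun t : ℝ => 2⁻¹ * t) (volume : Measure ℝ)
      = (2 : ℝ≥0∞) • volume := by
    have := Real.map_volume_mul_left (a := (2:ℝ)⁻¹) (by norm_num)
    simp only [inv_inv] at this
    rw [this]
    norm_num
  calc ∫⁻ t in Ioi (0:ℝ), g (2⁻¹ * t)
      = ∫⁻ s, g s ∂(Measure.map (fun t : ℝ => 2⁻¹ * t) (volume.restrict (Ioi (0:ℝ)))) := by
        rw [lintegral_map hg (measurable_const_mul _)]
    _ = 2 * ∫⁻ t in Ioi (0:ℝ), g t := by
        rw [h1, h2, Measure.restrict_smul, lintegral_smul_measure, smul_eq_mul]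

lemma exists_level_subset_open {E : Set X} (hE : IsCompact E) (hEne : E.Nonempty)
    {f : X → ℝ} (hf : Continuous f) {Ej : ℕ → Set X}
    (hconv : Filter.Tendsto (fun j => EMetric.hausdorffEdist (Ej j) E) Filter.atTop (nhds 0))
    {t : ℝ} {V : Set X} (hV : IsOpen V) (hKV : {x | x ∈ E ∧ t ≤ f x} ⊆ V) :
    ∃ j, {x | x ∈ Ej j ∧ t < f x} ⊆ V := by
  by_contra hcon
  push_neg at hcon
  simp only [Set.not_subset] at hcon
  choose x hxS hxV using hcon
  have hinf : Filter.Tendsto (fun j => EMetric.infEdist (x j) E) Filter.atTop (nhds 0) := by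
    refine tendsto_of_tendsto_of_tendsto_of_le_of_le tendsto_const_nhds hconv
      (fun j => zero_le) (fun j => ?_)
    exact EMetric.infEdist_le_hausdorffEdist_of_mem (hxS j).1
  choose y hyE hxy using fun j => hE.exists_infEdist_eq_edist hEne (x j)
  obtain ⟨y₀, hy₀E, φ, hφ, hyconv⟩ := hE.tendsto_subseq hyE
  have hed : Filter.Tendsto (fun k => edist (x (φ k)) y₀) Filter.atTop (nhds 0) := by
    have h1 : Filter.Tendsto (fun k => edist (x (φ k)) (y (φ k)) + edist (y (φ k)) y₀)
        Filter.atTop (nhds 0) := by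
      have ha : Filter.Tendsto (fun k => edist (x (φ k)) (y (φ k))) Filter.atTop (nhds 0) := by
        have := hinf.comp hφ.tendsto_atTop
        simpa [Function.comp_def, EMetric.infEdist, hxy] using this
      have hb : Filter.Tendsto (fun k => edist (y (φ k)) y₀) Filter.atTop (nhds 0) := by
        simpa using hyconv.edist (tendsto_const_nhds (x := y₀))
      simpa using ha.add hb
    refine tendsto_of_tendsto_of_tendsto_of_le_of_le tendsto_const_nhds h1
      (fun k => zero_le) (fun k => edist_triangle _ _ _)
  have hx0 : Filter.Tendsto (fun k => x (φ k)) Filter.atTop (nhds y₀) := by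
    rw [EMetric.tendsto_atTop]
    intro ε hε
    obtain ⟨N, hN⟩ := Filter.eventually_atTop.1 (hed.eventually_lt_const hε)
    exact ⟨N, hN⟩
  have hfy : t ≤ f y₀ := by
    have : Filter.Tendsto (fun k => f (x (φ k))) Filter.atTop (nhds (f y₀)) :=
      (hf.tendsto y₀).comp hx0
    exact ge_of_tendsto this (Filter.Eventually.of_forall fun k => le_of_lt (hxS (φ k)).2)
  have hy₀V : y₀ ∈ V := hKV ⟨hy₀E, hfy⟩
  have : ∀ᶠ k in Filter.atTop, x (φ k) ∈ V := hx0.eventually (hV.mem_nhds hy₀V)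
  obtain ⟨k, hk⟩ := this.exists
  exact hxV (φ k) hk

lemma pow_add_le (d : ℕ) (a b : ℝ≥0∞) : (a + b) ^ d ≤ 2 ^ d * (a ^ d + b ^ d) := by
  calc (a + b) ^ d ≤ (2 * (a ⊔ b)) ^ d := by
        refine pow_le_pow_left' ?_ d
        calc a + b ≤ (a ⊔ b) + (a ⊔ b) := add_le_add le_sup_left le_sup_right
          _ = 2 * (a ⊔ b) := (two_mul _).symm
    _ = 2 ^ d * (a ⊔ b) ^ d := mul_pow _ _ _
    _ ≤ 2 ^ d * (a ^ d + b ^ d) := by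
        refine mul_le_mul_right ?_ _
        rcases le_total a b with h | h
        · rw [sup_eq_right.2 h]; exact le_add_self
        · rw [sup_eq_left.2 h]; exact self_le_add_right _ _

lemma tsum_geom_aux : ∑' i : ℕ, ((2 : ℝ≥0∞)⁻¹) ^ i = 2 := by
  rw [ENNReal.tsum_geometric, ENNReal.one_sub_inv_two, inv_inv]

lemma stepA {d : ℕ} (hd : d ≠ 0) {E : Set X} (hE : IsCompact E) (hEne : E.Nonempty)
    {f : X → ℝ} (hf : Continuous f) {Ej : ℕ → Set X}
    (hconv : Filter.Tendsto (fun j => EMetric.hausdorffEdist (Ej j) E) Filter.atTop (nhds 0))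
    (t : ℝ) :
    ⨅ j, hContent d {x | x ∈ Ej j ∧ t < f x}
      ≤ 2 ^ d * hContent d {x | x ∈ E ∧ t ≤ f x} := by
  set K := {x | x ∈ E ∧ t ≤ f x} with hK
  set H := hContent d K with hHdef
  by_cases htop : H = ∞
  · simp [htop, ENNReal.mul_top, (pow_ne_zero d (two_ne_zero))]
  refine ENNReal.le_of_forall_pos_le_add fun ε hε hlt => ?_
  set ε' : ℝ≥0∞ := (ε : ℝ≥0∞) / (2 ^ d * 4) with hε'def
  have h24 : ((2:ℝ≥0∞) ^ d * 4) ≠ ∞ := ENNReal.mul_ne_top (ENNReal.pow_ne_top ofNat_ne_top) (by simp)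
  have h24' : ((2:ℝ≥0∞) ^ d * 4) ≠ 0 := by
    simp [pow_ne_zero]
  have hε'pos : 0 < ε' :=
    ENNReal.div_pos (by exact_mod_cast hε.ne') h24
  have hε'top : ε' ≠ ∞ := (ENNReal.div_lt_top coe_ne_top h24').ne
  -- get a cover
  have hlt2 : hContent d K < H + ε' := ENNReal.lt_add_right htop hε'pos.ne'
  rw [hContent, iInf_lt_iff] at hlt2
  obtain ⟨U, hlt3⟩ := hlt2
  rw [iInf_lt_iff] at hlt3
  obtain ⟨hU, hsum⟩ := hlt3
  -- radii
  set δ : ℕ → ℝ≥0∞ := fun i => min 1 (ε' * (2⁻¹) ^ i) with hδdef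
  have hδpos : ∀ i, 0 < δ i := fun i => by
    refine lt_min one_pos ?_
    exact ENNReal.mul_pos hε'pos.ne' (pow_ne_zero i (ENNReal.inv_ne_zero.2 ofNat_ne_top))
  have hδtop : ∀ i, δ i ≠ ∞ := fun i => ne_top_of_le_ne_top one_ne_top (min_le_left _ _)
  have hδ1 : ∀ i, δ i ≤ 1 := fun i => min_le_left _ _
  set r : ℕ → ℝ≥0 := fun i => (δ i / 2).toNNReal with hrdef
  have hrpos : ∀ i, 0 < r i := fun i => by
    rw [hrdef]
    simp only [ENNReal.toNNReal_pos_iff]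
    exact ⟨ENNReal.div_pos (hδpos i).ne' ofNat_ne_top,
      (ENNReal.div_lt_top (hδtop i) two_ne_zero)⟩
  have hrcoe : ∀ i, (r i : ℝ≥0∞) = δ i / 2 := fun i =>
    ENNReal.coe_toNNReal (ENNReal.div_lt_top (hδtop i) two_ne_zero).ne
  set V : ℕ → Set X := fun i => Metric.thickening (r i) (U i) with hVdef
  have hUV : ∀ i, U i ⊆ V i := fun i => self_subset_thickening (by exact_mod_cast hrpos i) _
  have hdiamV : ∀ i, EMetric.diam (V i) ≤ EMetric.diam (U i) + δ i := by
    intro i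
    refine (Metric.ediam_thickening_le (r i)).trans ?_
    rw [hrcoe i]
    gcongr
    · exact le_rfl
    rw [ENNReal.mul_div_cancel two_ne_zero ofNat_ne_top]
  have hVopen : IsOpen (⋃ i, V i) := isOpen_iUnion fun i => Metric.isOpen_thickening
  have hKV : K ⊆ ⋃ i, V i := hU.trans (iUnion_mono hUV)
  obtain ⟨j, hj⟩ := exists_level_subset_open hE hEne hf hconv hVopen hKV
  have hbound : hContent d {x | x ∈ Ej j ∧ t < f x} ≤ ∑' i, EMetric.diam (V i) ^ d := by
    refine iInf₂_le V ?_
    exact hj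
  have hδd : ∀ i, δ i ^ d ≤ ε' * (2⁻¹) ^ i := by
    intro i
    calc δ i ^ d ≤ δ i ^ 1 := pow_le_pow_right_of_le_one' (hδ1 i) (Nat.one_le_iff_ne_zero.2 hd)
      _ = δ i := pow_one _
      _ ≤ ε' * (2⁻¹) ^ i := min_le_right _ _
  have hsumV : ∑' i, EMetric.diam (V i) ^ d ≤ 2 ^ d * ((H + ε') + 2 * ε') := by
    calc ∑' i, EMetric.diam (V i) ^ d
        ≤ ∑' i, 2 ^ d * (EMetric.diam (U i) ^ d + δ i ^ d) := by
          refine ENNReal.tsum_le_tsum fun i => ?_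
          refine le_trans (pow_le_pow_left' (hdiamV i) d) (pow_add_le d _ _)
      _ = 2 ^ d * (∑' i, EMetric.diam (U i) ^ d + ∑' i, δ i ^ d) := by
          rw [ENNReal.tsum_mul_left, ENNReal.tsum_add]
      _ ≤ 2 ^ d * ((H + ε') + 2 * ε') := by
          gcongr
          · calc ∑' i, δ i ^ d ≤ ∑' i, ε' * (2⁻¹) ^ i := ENNReal.tsum_le_tsum hδd
              _ = ε' * 2 := by rw [ENNReal.tsum_mul_left, tsum_geom_aux]
              _ = 2 * ε' := mul_comm _ _
  have hfinal : (⨅ j, hContent d {x | x ∈ Ej j ∧ t < f x}) ≤ 2 ^ d * ((H + ε') + 2 * ε') :=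
    le_trans (iInf_le _ j) (hbound.trans hsumV)
  refine hfinal.trans ?_
  have : (2:ℝ≥0∞) ^ d * ((H + ε') + 2 * ε') = 2 ^ d * H + 2 ^ d * (3 * ε') := by ring
  rw [this]
  gcongr
  calc (2:ℝ≥0∞) ^ d * (3 * ε') ≤ 2 ^ d * (4 * ε') := by gcongr <;> norm_num
    _ = (2 ^ d * 4) * ε' := by ring
    _ = ε := ENNReal.mul_div_cancel h24' h24

lemma choquet_zero_dim (E : Set X) (f : X → ℝ) : choquet 0 E f = ∞ := by
  rw [choquet]
  simp only [hContent_zero]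
  rw [setLIntegral_const]
  simp [Real.volume_Ioi]

lemma choquet_empty {d : ℕ} (hd : d ≠ 0) (f : X → ℝ) : choquet d (∅ : Set X) f = 0 := by
  rw [choquet]
  have : ∀ t : ℝ, {x : X | x ∈ (∅ : Set X) ∧ t < f x} = ∅ := fun t => by simp
  simp only [this, hContent_empty hd]
  simp

lemma choquet_ne_top {Y : Type*} [MetricSpace Y] [ProperSpace Y] {d : ℕ} (hd : d ≠ 0)
    {E A : Set Y} (hE : IsCompact E) {f : Y → ℝ}
    (hf : Continuous f) (hfnn : ∀ x, 0 ≤ f x) (hA : A ⊆ Metric.cthickening 1 E) :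
    choquet d A f ≠ ∞ := by
  set K' := Metric.cthickening 1 E with hK'def
  have hK' : IsCompact K' := hE.cthickening
  by_cases hne : K'.Nonempty
  · obtain ⟨z, hz, hmax'⟩ := hK'.exists_isMaxOn hne hf.continuousOn
    have hmax : ∀ x ∈ K', f x ≤ f z := fun x hx => hmax' hx
    set M := f z with hMdef
    have hM0 : 0 ≤ M := hfnn z
    have hsub : ∀ t : ℝ, {x | x ∈ A ∧ t < f x} ⊆ K' := fun t x hx => hA hx.1
    have hcont_le : ∀ t : ℝ, hContent d {x | x ∈ A ∧ t < f x} ≤ EMetric.diam K' ^ d := fun t =>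
      (hContent_mono d (hsub t)).trans (hContent_le_diam_pow hd _)
    have hzero : ∀ t : ℝ, t ∈ Ioi M → hContent d {x | x ∈ A ∧ t < f x} = 0 := by
      intro t ht
      have hemp : {x | x ∈ A ∧ t < f x} = ∅ := by
        ext x
        simp only [mem_setOf_eq, mem_empty_iff_false, iff_false, not_and, not_lt]
        intro hxA
        exact le_trans (hmax x (hA hxA)) (le_of_lt ht)
      rw [hemp, hContent_empty hd]
    have hdiam : EMetric.diam K' ^ d ≠ ∞ :=
      ENNReal.pow_ne_top hK'.isBounded.ediam_ne_top
    rw [choquet, ← Ioc_union_Ioi_eq_Ioi hM0,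
      lintegral_union measurableSet_Ioi (Set.Ioc_disjoint_Ioi le_rfl)]
    have h1 : ∫⁻ t in Ioc (0:ℝ) M, hContent d {x | x ∈ A ∧ t < f x}
        ≤ EMetric.diam K' ^ d * ENNReal.ofReal M := by
      calc ∫⁻ t in Ioc (0:ℝ) M, hContent d {x | x ∈ A ∧ t < f x}
          ≤ ∫⁻ _ in Ioc (0:ℝ) M, EMetric.diam K' ^ d := lintegral_mono fun t => hcont_le t
        _ = EMetric.diam K' ^ d * ENNReal.ofReal M := by
            rw [setLIntegral_const, Real.volume_Ioc]
            simp
    have h2 : ∫⁻ t in Ioi M, hContent d {x | x ∈ A ∧ t < f x} = 0 := by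
      rw [setLIntegral_congr_fun measurableSet_Ioi
        (fun t ht => hzero t ht)]
      simp
    rw [h2, add_zero]
    exact ne_top_of_le_ne_top (ENNReal.mul_ne_top hdiam ofReal_ne_top) h1
  · have hAe : A = ∅ := by
      rw [not_nonempty_iff_eq_empty] at hne
      exact eq_empty_of_subset_empty (hne ▸ hA)
    rw [hAe, choquet_empty hd]
    exact zero_ne_top

set_option maxHeartbeats 1000000 in
/-- If `E` is compact, `f` continuous and nonnegative, and `E_j` is a decreasing sequence of
sets containing `E` converging to `E` in the Hausdorff metric, then
`lim_j ∫_{E_j} f dH^d_∞` exists and is comparable (with dimensional constants) to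
`∫_E f dH^d_∞`. -/
theorem stmt_1 (n d : ℕ) :
    ∃ C : ℝ≥0∞, 1 ≤ C ∧ C ≠ ∞ ∧
      ∀ (E : Set (EuclideanSpace ℝ (Fin n))) (f : EuclideanSpace ℝ (Fin n) → ℝ)
        (Ej : ℕ → Set (EuclideanSpace ℝ (Fin n))),
        IsCompact E → Continuous f → (∀ x, 0 ≤ f x) →
        Antitone Ej → (∀ j, E ⊆ Ej j) →
        Filter.Tendsto (fun j => EMetric.hausdorffEdist (Ej j) E) Filter.atTop (nhds 0) →
        ∃ L : ℝ≥0∞,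
          Filter.Tendsto (fun j => choquet d (Ej j) f) Filter.atTop (nhds L) ∧
          choquet d E f ≤ C * L ∧ L ≤ C * choquet d E f := by
  refine ⟨2 ^ (d + 1), one_le_pow_of_one_le' one_le_two _, ENNReal.pow_ne_top ofNat_ne_top, ?_⟩
  intro E f Ej hE hf hfnn hEj hsub hconv
  by_cases hd : d = 0
  · subst hd
    refine ⟨∞, ?_, ?_, ?_⟩
    · simpa [choquet_zero_dim] using
        (tendsto_const_nhds : Filter.Tendsto (fun _ : ℕ => (∞ : ℝ≥0∞)) Filter.atTop (nhds ∞))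
    · exact le_top.trans (by simp)
    · rw [choquet_zero_dim E f]
      simp
  by_cases hEne : E.Nonempty
  · -- main case
    have hanti_ch : Antitone (fun j => choquet d (Ej j) f) := fun i j hij =>
      choquet_mono d f (hEj hij)
    refine ⟨⨅ j, choquet d (Ej j) f, tendsto_atTop_iInf hanti_ch, ?_, ?_⟩
    · refine le_trans (le_iInf fun j => choquet_mono d f (hsub j)) ?_
      exact le_mul_of_one_le_left zero_le (one_le_pow_of_one_le' one_le_two _)
    -- hard direction
    -- find j0 with Ej j0 inside cthickening 1 E
    have hev : ∀ᶠ j in Filter.atTop, EMetric.hausdorffEdist (Ej j) E < ENNReal.ofReal 1 :=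
      hconv.eventually_lt_const (by simp)
    obtain ⟨j0, hj0⟩ := hev.exists
    have hthick : Ej j0 ⊆ Metric.cthickening 1 E := by
      intro x hx
      rw [Metric.mem_cthickening_iff]
      exact le_trans (EMetric.infEdist_le_hausdorffEdist_of_mem hx) hj0.le
    set h : ℕ → ℝ → ℝ≥0∞ := fun j t => hContent d {x | x ∈ Ej (j0 + j) ∧ t < f x} with hhdef
    have hmeas : ∀ j, Measurable (h j) := fun j => (antitone_hc d (Ej (j0 + j)) f).measurable
    have hanti : Antitone h := fun i j hij t =>
      hContent_mono d fun x hx => ⟨hEj (by omega) hx.1, hx.2⟩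
    have hfin0 : ∫⁻ t in Ioi (0:ℝ), h 0 t ≠ ∞ := by
      have := choquet_ne_top (Y := EuclideanSpace ℝ (Fin n)) hd hE hf hfnn hthick
      simpa [choquet, hhdef] using this
    have hg_anti : Antitone (fun t : ℝ => hContent d {x | x ∈ E ∧ t < f x}) :=
      antitone_hc d E f
    have hgmeas : Measurable (fun t : ℝ => hContent d {x | x ∈ E ∧ t < f x}) :=
      hg_anti.measurable
    have hconv' : Filter.Tendsto (fun j => EMetric.hausdorffEdist (Ej (j0 + j)) E)
        Filter.atTop (nhds 0) := by
      have : Filter.Tendsto (fun j : ℕ => j0 + j) Filter.atTop Filter.atTop :=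
        Filter.tendsto_atTop_mono (fun j => Nat.le_add_left j j0) Filter.tendsto_id
      exact hconv.comp this
    calc (⨅ j, choquet d (Ej j) f)
        ≤ ⨅ j, ∫⁻ t in Ioi (0:ℝ), h j t := le_iInf fun j => iInf_le _ (j0 + j)
      _ = ∫⁻ t in Ioi (0:ℝ), ⨅ j, h j t := (lintegral_iInf hmeas hanti hfin0).symm
      _ ≤ ∫⁻ t in Ioi (0:ℝ), 2 ^ d * hContent d {x | x ∈ E ∧ t ≤ f x} := by
          refine lintegral_mono fun t => ?_
          exact stepA hd hE hEne hf hconv' t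
      _ ≤ ∫⁻ t in Ioi (0:ℝ), 2 ^ d * hContent d {x | x ∈ E ∧ 2⁻¹ * t < f x} := by
          refine setLIntegral_mono' measurableSet_Ioi fun t ht => ?_
          have h2t : (2:ℝ)⁻¹ * t < t := by
            rw [mem_Ioi] at ht; nlinarith
          refine mul_le_mul_right (hContent_mono d ?_) _
          intro x hx
          exact ⟨hx.1, lt_of_lt_of_le h2t hx.2⟩
      _ = 2 ^ d * ∫⁻ t in Ioi (0:ℝ), hContent d {x | x ∈ E ∧ 2⁻¹ * t < f x} := by
          rw [lintegral_const_mul]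
          exact hgmeas.comp (measurable_const_mul _)
      _ = 2 ^ d * (2 * choquet d E f) := by
          rw [lint_half _ hgmeas, choquet]
      _ = 2 ^ (d + 1) * choquet d E f := by ring
  · -- E empty
    have hEe : E = ∅ := not_nonempty_iff_eq_empty.1 hEne
    subst hEe
    have hev : ∀ᶠ j in Filter.atTop, choquet d (Ej j) f = 0 := by
      have h1 : ∀ᶠ j in Filter.atTop, EMetric.hausdorffEdist (Ej j) (∅ : Set _) < 1 :=
        hconv.eventually_lt_const (by simp)
      refine h1.mono fun j hj => ?_
      have hje : Ej j = ∅ := by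
        by_contra hne
        rw [← Ne, ← nonempty_iff_ne_empty] at hne
        rw [EMetric.hausdorffEdist, EMetric.hausdorffEdist_empty hne] at hj
        exact absurd hj (by simp)
      rw [hje, choquet_empty hd]
    refine ⟨0, ?_, by simp [choquet_empty hd], by simp⟩
    exact Filter.Tendsto.congr' (hev.mono fun j hj => hj.symm) tendsto_const_nhds
end
end

section
/- If P₁, P₂, P₃ are affine d-planes in ℝ^n all containing the point x, then for every r > 0 the normalized local Hausdorff distance satisfies the triangle inequality d_{x,r}(P₁,P₃) ≤ d_{x,r}(P₁,P₂) + d_{x,r}(P₂,P₃). -/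
open Metric Set ENNReal

noncomputable section

/-- An affine `d`-plane: a nonempty affine subspace with direction of dimension `d`. -/
def IsAffPlane {X : Type*} [NormedAddCommGroup X] [NormedSpace ℝ X] (d : ℕ)
    (P : AffineSubspace ℝ X) : Prop :=
  (P : Set X).Nonempty ∧ Module.finrank ℝ P.direction = d

/-- The normalized local Hausdorff distance `d_{x,r}(E,F)`. -/
def dLoc {X : Type*} [MetricSpace X] (x : X) (r : ℝ) (E F : Set X) : ℝ≥0∞ :=
  (ENNReal.ofReal r)⁻¹ *
    max (⨆ y ∈ E ∩ closedBall x r, ENNReal.ofReal (infDist y F))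
        (⨆ y ∈ F ∩ closedBall x r, ENNReal.ofReal (infDist y E))

lemma key_triangle {n : ℕ} (x : EuclideanSpace ℝ (Fin n)) (r : ℝ)
    (P₁ P₂ P₃ : AffineSubspace ℝ (EuclideanSpace ℝ (Fin n))) (hx₂ : x ∈ P₂) :
    (⨆ y ∈ (P₁ : Set (EuclideanSpace ℝ (Fin n))) ∩ closedBall x r,
        ENNReal.ofReal (infDist y (P₃ : Set (EuclideanSpace ℝ (Fin n))))) ≤
      (⨆ y ∈ (P₁ : Set (EuclideanSpace ℝ (Fin n))) ∩ closedBall x r,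
        ENNReal.ofReal (infDist y (P₂ : Set (EuclideanSpace ℝ (Fin n))))) +
      (⨆ y ∈ (P₂ : Set (EuclideanSpace ℝ (Fin n))) ∩ closedBall x r,
        ENNReal.ofReal (infDist y (P₃ : Set (EuclideanSpace ℝ (Fin n))))) := by
  haveI : Nonempty P₂ := ⟨⟨x, hx₂⟩⟩
  refine iSup₂_le fun y hy => ?_
  obtain ⟨hy₁, hyB⟩ := hy
  set z : EuclideanSpace ℝ (Fin n) :=
    (EuclideanGeometry.orthogonalProjection P₂ y : EuclideanSpace ℝ (Fin n)) with hz
  have hzP₂ : z ∈ P₂ := (EuclideanGeometry.orthogonalProjection P₂ y).2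
  -- distance from y to z is infDist y P₂
  have hnear : dist y z ≤ infDist y (P₂ : Set (EuclideanSpace ℝ (Fin n))) := by
    rw [Metric.infDist_eq_iInf]
    refine le_ciInf fun p => ?_
    have h := EuclideanGeometry.dist_sq_eq_dist_orthogonalProjection_sq_add_dist_orthogonalProjection_sq
      (s := P₂) y p.2
    rw [← hz] at h
    have h1 : (0:ℝ) ≤ dist y z := dist_nonneg
    have h2 : (0:ℝ) ≤ dist (p : EuclideanSpace ℝ (Fin n)) z := dist_nonneg
    have h3 : (0:ℝ) ≤ dist (p : EuclideanSpace ℝ (Fin n)) y := dist_nonneg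
    rw [dist_comm (p : EuclideanSpace ℝ (Fin n)) y] at h
    have hsq : dist y z * dist y z ≤ dist y (p : EuclideanSpace ℝ (Fin n)) * dist y (p : EuclideanSpace ℝ (Fin n)) := by
      nlinarith [mul_self_nonneg (dist y (p : EuclideanSpace ℝ (Fin n)))]
    nlinarith [hsq, h1, dist_nonneg (x := y) (y := (p : EuclideanSpace ℝ (Fin n)))]
  -- z is in the ball
  have hzB : z ∈ closedBall x r := by
    have h := EuclideanGeometry.dist_sq_eq_dist_orthogonalProjection_sq_add_dist_orthogonalProjection_sq
      (s := P₂) y hx₂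
    rw [← hz] at h
    have h1 : (0:ℝ) ≤ dist x z := dist_nonneg
    have h2 : (0:ℝ) ≤ dist x y := dist_nonneg
    have h3 : (0:ℝ) ≤ dist y z := dist_nonneg
    have hxz : dist x z ≤ dist x y := by nlinarith
    have hyx : dist x y ≤ r := by rw [dist_comm]; exact mem_closedBall.mp hyB
    exact mem_closedBall.mpr (by rw [dist_comm]; exact hxz.trans hyx)
  have step : infDist y (P₃ : Set (EuclideanSpace ℝ (Fin n))) ≤
      infDist y (P₂ : Set (EuclideanSpace ℝ (Fin n))) +
      infDist z (P₃ : Set (EuclideanSpace ℝ (Fin n))) := by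
    calc infDist y (P₃ : Set (EuclideanSpace ℝ (Fin n)))
        ≤ infDist z (P₃ : Set (EuclideanSpace ℝ (Fin n))) + dist y z :=
          Metric.infDist_le_infDist_add_dist
      _ ≤ infDist y (P₂ : Set (EuclideanSpace ℝ (Fin n))) +
          infDist z (P₃ : Set (EuclideanSpace ℝ (Fin n))) := by linarith
  calc ENNReal.ofReal (infDist y (P₃ : Set (EuclideanSpace ℝ (Fin n))))
      ≤ ENNReal.ofReal (infDist y (P₂ : Set (EuclideanSpace ℝ (Fin n))) +
          infDist z (P₃ : Set (EuclideanSpace ℝ (Fin n)))) := ENNReal.ofReal_le_ofReal step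
    _ ≤ ENNReal.ofReal (infDist y (P₂ : Set (EuclideanSpace ℝ (Fin n)))) +
        ENNReal.ofReal (infDist z (P₃ : Set (EuclideanSpace ℝ (Fin n)))) :=
          ENNReal.ofReal_add_le
    _ ≤ _ := by
        gcongr
        · exact le_iSup₂_of_le y ⟨hy₁, hyB⟩ le_rfl
        · exact le_iSup₂_of_le z ⟨hzP₂, hzB⟩ le_rfl

/-- Triangle inequality for the normalized local Hausdorff distance between affine `d`-planes
all passing through the center `x`. -/
theorem stmt_7 {n : ℕ} (d : ℕ) (x : EuclideanSpace ℝ (Fin n)) (r : ℝ) (hr : 0 < r)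
    (P₁ P₂ P₃ : AffineSubspace ℝ (EuclideanSpace ℝ (Fin n)))
    (h₁ : IsAffPlane d P₁) (h₂ : IsAffPlane d P₂) (h₃ : IsAffPlane d P₃)
    (hx₁ : x ∈ P₁) (hx₂ : x ∈ P₂) (hx₃ : x ∈ P₃) :
    dLoc x r (P₁ : Set (EuclideanSpace ℝ (Fin n))) (P₃ : Set (EuclideanSpace ℝ (Fin n))) ≤
      dLoc x r (P₁ : Set (EuclideanSpace ℝ (Fin n))) (P₂ : Set (EuclideanSpace ℝ (Fin n))) +
      dLoc x r (P₂ : Set (EuclideanSpace ℝ (Fin n))) (P₃ : Set (EuclideanSpace ℝ (Fin n))) := by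
  unfold dLoc
  rw [← mul_add]
  refine mul_le_mul_right ?_ _
  refine max_le ?_ ?_
  · calc (⨆ y ∈ (P₁ : Set (EuclideanSpace ℝ (Fin n))) ∩ closedBall x r,
        ENNReal.ofReal (infDist y (P₃ : Set (EuclideanSpace ℝ (Fin n)))))
        ≤ _ + _ := key_triangle x r P₁ P₂ P₃ hx₂
      _ ≤ _ := add_le_add (le_max_left _ _) (le_max_left _ _)
  · calc (⨆ y ∈ (P₃ : Set (EuclideanSpace ℝ (Fin n))) ∩ closedBall x r,
        ENNReal.ofReal (infDist y (P₁ : Set (EuclideanSpace ℝ (Fin n)))))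
        ≤ _ + _ := key_triangle x r P₃ P₂ P₁ hx₂
      _ ≤ _ := by
          rw [add_comm]
          exact add_le_add (le_max_right _ _) (le_max_right _ _)
end
end

section
/- (Bounded overlap of stopped balls) Let {B_j = B(y_j, δ M ℓ_j / 2)} be a family of balls in ℝ^n indexed by cubes Q_j with side lengths ℓ_j, where each center y_j satisfies dist(y_j, E) ≥ δ M ℓ_j for a fixed set E and constants δ ∈ (0,1), M ≥ 1, and where the points {y_j} satisfy |y_j − y_i| ≤ M(ℓ_j + ℓ_i) whenever B_j ∩ B_i ≠ ∅ and the centers at comparable scales are ρ^k-separated (i.e., for each k, the y_j with ℓ_j = 5ρ^k are pairwise at distance ≥ ρ^k). Then any point x ∈ ℝ^n lies in at most C(δ, M, n, ρ) of the balls B_j: if x ∈ B_j ∩ B_i then ℓ_j ∼_{δ,M} ℓ_i, so only boundedly many scales and boundedly many balls per scale can contain x. -/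
open Metric Set MeasureTheory

lemma pack_lemma (n : ℕ) (s : Finset (EuclideanSpace ℝ (Fin n)))
    (x : EuclideanSpace ℝ (Fin n)) (r R : ℝ) (hr : 0 < r) (hR : 0 ≤ R)
    (hmem : ∀ y ∈ s, dist y x ≤ R)
    (hsep : ∀ y ∈ s, ∀ z ∈ s, y ≠ z → r ≤ dist y z) :
    (s.card : ℝ) * (r / 2) ^ n ≤ (R + r) ^ n := by
  set μ : Measure (EuclideanSpace ℝ (Fin n)) := volume
  have hdisj : (s : Set (EuclideanSpace ℝ (Fin n))).PairwiseDisjoint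
      (fun y => ball y (r / 2)) := by
    intro a ha b hb hab
    exact ball_disjoint_ball (by linarith [hsep a ha b hb hab])
  have hsub : ∀ y ∈ s, ball y (r / 2) ⊆ ball x (R + r) := by
    intro y hy z hz
    simp only [mem_ball] at hz ⊢
    have := hmem y hy
    calc dist z x ≤ dist z y + dist y x := dist_triangle _ _ _
      _ < R + r := by linarith
  have hmeas := measure_biUnion_finset hdisj (fun y _ => measurableSet_ball) (μ := μ)
  have hle : ∑ y ∈ s, μ (ball y (r / 2)) ≤ μ (ball x (R + r)) := by
    rw [← hmeas]
    exact measure_mono (Set.iUnion₂_subset hsub)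
  have hballeq : ∀ y : EuclideanSpace ℝ (Fin n),
      μ (ball y (r / 2)) = ENNReal.ofReal ((r / 2) ^ n) * μ (ball 0 1) := by
    intro y
    rw [Measure.addHaar_ball_of_pos μ y (by linarith), finrank_euclideanSpace_fin]
  have hR0 : 0 < R + r := by linarith
  have hbig : μ (ball x (R + r)) = ENNReal.ofReal ((R + r) ^ n) * μ (ball 0 1) := by
    rw [Measure.addHaar_ball_of_pos μ x hR0, finrank_euclideanSpace_fin]
  rw [Finset.sum_congr rfl (fun y _ => hballeq y), Finset.sum_const, hbig, nsmul_eq_mul,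
    ← mul_assoc] at hle
  have hμpos : 0 < μ (ball (0 : EuclideanSpace ℝ (Fin n)) 1) := measure_ball_pos μ 0 one_pos
  have hμfin : μ (ball (0 : EuclideanSpace ℝ (Fin n)) 1) ≠ ⊤ := measure_ball_lt_top.ne
  have hle2 : (s.card : ENNReal) * ENNReal.ofReal ((r / 2) ^ n) ≤ ENNReal.ofReal ((R + r) ^ n) :=
    (ENNReal.mul_le_mul_iff_left hμpos.ne' hμfin).mp hle
  rw [← ENNReal.ofReal_natCast, ← ENNReal.ofReal_mul (by positivity)] at hle2
  rwa [ENNReal.ofReal_le_ofReal_iff (by positivity)] at hle2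

/-- Bounded overlap of stopped balls: balls `B_j = B(y_j, δMℓ_j/2)` whose centers satisfy
`δMℓ_j ≤ dist(y_j,E) ≤ 2Mℓ_j` (so the balls stay quantitatively away from, and near, `E`),
whose centers at a common dyadic scale `ℓ_j = 5ρ^{k_j}` are `ρ^{k_j}`-separated, and whose
centers are `M(ℓ_i+ℓ_j)`-close whenever the balls meet, have overlap bounded by a constant
`C(δ, M, n, ρ)`. -/
theorem stmt_19 (n : ℕ) (ρ δ M : ℝ) (hρ0 : 0 < ρ) (hρ1 : ρ < 1)
    (hδ0 : 0 < δ) (hδ1 : δ < 1) (hM : 1 ≤ M) :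
    ∃ C : ℕ,
      ∀ (ι : Type) (E : Set (EuclideanSpace ℝ (Fin n)))
        (y : ι → EuclideanSpace ℝ (Fin n)) (k : ι → ℕ),
        (∀ j, δ * M * (5 * ρ ^ k j) ≤ infDist (y j) E) →
        (∀ j, infDist (y j) E ≤ 2 * M * (5 * ρ ^ k j)) →
        (∀ i j, i ≠ j → k i = k j → ρ ^ k i ≤ dist (y i) (y j)) →
        (∀ i j, (closedBall (y i) (δ * M * (5 * ρ ^ k i) / 2) ∩
                  closedBall (y j) (δ * M * (5 * ρ ^ k j) / 2)).Nonempty →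
          dist (y i) (y j) ≤ M * (5 * ρ ^ k i + 5 * ρ ^ k j)) →
        ∀ x : EuclideanSpace ℝ (Fin n),
          {j | x ∈ closedBall (y j) (δ * M * (5 * ρ ^ k j) / 2)}.Finite ∧
          {j | x ∈ closedBall (y j) (δ * M * (5 * ρ ^ k j) / 2)}.ncard ≤ C := by
  classical
  obtain ⟨m, hm⟩ : ∃ m : ℕ, ρ ^ m < δ / 5 := exists_pow_lt_of_lt_one (by positivity) hρ1
  refine ⟨(2 * m + 1) * ⌈(5 * M + 2) ^ n⌉₊, ?_⟩
  intro ι E y k h1 h2 h3 _h4 x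
  set S := {j | x ∈ closedBall (y j) (δ * M * (5 * ρ ^ k j) / 2)} with hSdef
  have hM0 : (0 : ℝ) < M := lt_of_lt_of_le one_pos hM
  have hpow : ∀ t : ℕ, (0 : ℝ) < ρ ^ t := fun t => pow_pos hρ0 t
  -- comparability of scales for overlapping balls
  have hA : ∀ i ∈ S, ∀ j ∈ S, δ * ρ ^ k j ≤ 5 * ρ ^ k i := by
    intro i hi j hj
    simp only [hSdef, mem_setOf_eq, mem_closedBall] at hi hj
    have hxE1 : δ * M * (5 * ρ ^ k j) / 2 ≤ infDist x E := by
      have t2 : infDist (y j) E ≤ infDist x E + dist (y j) x :=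
        infDist_le_infDist_add_dist
      rw [dist_comm] at t2
      linarith [h1 j]
    have hxE2 : infDist x E ≤ 2 * M * (5 * ρ ^ k i) + δ * M * (5 * ρ ^ k i) / 2 := by
      have t3 : infDist x E ≤ infDist (y i) E + dist x (y i) :=
        infDist_le_infDist_add_dist
      linarith [h2 i]
    have hgoal : M * (δ * ρ ^ k j) ≤ M * (5 * ρ ^ k i) := by
      nlinarith [hxE1.trans hxE2,
        mul_nonneg (mul_nonneg (sub_nonneg.mpr hδ1.le) hM0.le) (hpow (k i)).le]
    exact le_of_mul_le_mul_left hgoal hM0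
  -- bounded range of scales
  have hk : ∀ i ∈ S, ∀ j ∈ S, k j ≤ k i + m := by
    intro i hi j hj
    by_contra h
    push_neg at h
    have h5 : ρ ^ k j ≤ ρ ^ (k i + m) :=
      pow_le_pow_of_le_one hρ0.le hρ1.le (le_of_lt h)
    have h6 := hA j hj i hi
    rw [pow_add] at h5
    nlinarith [mul_lt_mul_of_pos_left hm (hpow (k i)), hpow (k j)]
  -- uniform bound on cards of finite subsets of S
  have key : ∀ F : Finset ι, ↑F ⊆ S → F.card ≤ (2 * m + 1) * ⌈(5 * M + 2) ^ n⌉₊ := by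
    intro F hF
    rcases F.eq_empty_or_nonempty with rfl | ⟨j₀, hj₀⟩
    · simp
    have hj₀S : j₀ ∈ S := hF hj₀
    have hrange : ∀ j ∈ F, k j ∈ Finset.Icc (k j₀ - m) (k j₀ + m) := by
      intro j hj
      have ha := hk j₀ hj₀S j (hF hj)
      have hb := hk j (hF hj) j₀ hj₀S
      simp only [Finset.mem_Icc]
      omega
    rw [Finset.card_eq_sum_card_fiberwise hrange]
    have hfiber : ∀ κ ∈ Finset.Icc (k j₀ - m) (k j₀ + m),
        (F.filter (fun j => k j = κ)).card ≤ ⌈(5 * M + 2) ^ n⌉₊ := by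
      intro κ _
      set Fκ := F.filter (fun j => k j = κ) with hFκ
      have hinj : Set.InjOn y ↑Fκ := by
        intro a ha b hb hab
        by_contra hne
        have hka : k a = κ := (Finset.mem_filter.mp ha).2
        have hkb : k b = κ := (Finset.mem_filter.mp hb).2
        have hd := h3 a b hne (by rw [hka, hkb])
        rw [hab, dist_self] at hd
        exact absurd hd (not_le.mpr (by rw [hka]; exact hpow κ))
      set G := Fκ.image y with hG
      have hcard : G.card = Fκ.card := Finset.card_image_of_injOn hinj
      have hmem : ∀ z ∈ G, dist z x ≤ δ * M * (5 * ρ ^ κ) / 2 := by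
        intro z hz
        obtain ⟨j, hj, rfl⟩ := Finset.mem_image.mp hz
        have hjF : j ∈ F := (Finset.mem_filter.mp hj).1
        have hjκ : k j = κ := (Finset.mem_filter.mp hj).2
        have hjS : j ∈ S := hF hjF
        simp only [hSdef, mem_setOf_eq, mem_closedBall] at hjS
        rw [dist_comm, ← hjκ]
        exact hjS
      have hsep : ∀ z ∈ G, ∀ w ∈ G, z ≠ w → ρ ^ κ ≤ dist z w := by
        intro z hz w hw hzw
        obtain ⟨i, hi, rfl⟩ := Finset.mem_image.mp hz
        obtain ⟨j, hj, rfl⟩ := Finset.mem_image.mp hw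
        have hki : k i = κ := (Finset.mem_filter.mp hi).2
        have hkj : k j = κ := (Finset.mem_filter.mp hj).2
        have hne : i ≠ j := fun h => hzw (by rw [h])
        have := h3 i j hne (by rw [hki, hkj])
        rwa [hki] at this
      have hp := pack_lemma n G x (ρ ^ κ) (δ * M * (5 * ρ ^ κ) / 2) (hpow κ)
        (by positivity) hmem hsep
      have heq : δ * M * (5 * ρ ^ κ) / 2 + ρ ^ κ = (ρ ^ κ / 2) * (5 * δ * M + 2) := by ring
      rw [heq, mul_pow, mul_comm ((ρ ^ κ / 2) ^ n)] at hp
      have hpos : (0 : ℝ) < (ρ ^ κ / 2) ^ n := by positivity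
      have hcard2 : (G.card : ℝ) ≤ (5 * δ * M + 2) ^ n := le_of_mul_le_mul_right hp hpos
      have hle3 : ((5 * δ * M + 2 : ℝ)) ^ n ≤ (5 * M + 2) ^ n := by
        apply pow_le_pow_left₀ (by positivity)
        nlinarith
      have hfin2 : (Fκ.card : ℝ) ≤ (⌈(5 * M + 2) ^ n⌉₊ : ℝ) := by
        rw [← hcard]
        exact (hcard2.trans hle3).trans (Nat.le_ceil _)
      exact_mod_cast hfin2
    calc ∑ κ ∈ Finset.Icc (k j₀ - m) (k j₀ + m), (F.filter (fun j => k j = κ)).card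
        ≤ ∑ _κ ∈ Finset.Icc (k j₀ - m) (k j₀ + m), ⌈(5 * M + 2) ^ n⌉₊ :=
          Finset.sum_le_sum hfiber
      _ = (Finset.Icc (k j₀ - m) (k j₀ + m)).card * ⌈(5 * M + 2) ^ n⌉₊ := by
          rw [Finset.sum_const, smul_eq_mul]
      _ ≤ (2 * m + 1) * ⌈(5 * M + 2) ^ n⌉₊ := by
          apply Nat.mul_le_mul_right
          rw [Nat.card_Icc]
          omega
  have hfin : S.Finite := by
    by_contra h
    obtain ⟨t, hts, htf, htc⟩ :=
      Set.Infinite.exists_subset_ncard_eq h ((2 * m + 1) * ⌈(5 * M + 2) ^ n⌉₊ + 1)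
    have hkey := key htf.toFinset (by simpa using hts)
    rw [Set.ncard_eq_toFinset_card t htf] at htc
    omega
  refine ⟨hfin, ?_⟩
  have hkey := key hfin.toFinset (by simp)
  rw [Set.ncard_eq_toFinset_card S hfin]
  exact hkey
end
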